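/- Let F_1,...,F_n be marginal distributions on the nonnegative reals, each having a density and satisfying the monotone hazard rate (MHR) property. For each i let μ_i be the median of F_i, and let i be an item whose median μ_i is (weakly) largest. Then the single pricing p that sets p_i = μ_i and p_j = ∞ for every j ≠ i is 3.5-max-min optimal: R(p) ≥ R*/3.5, where R* is the optimal robust revenue guarantee over all pricings. -/

import Mathlib

open MeasureTheory
open scoped ENNReal NNReal

noncomputable section

/-- A buyer's purchase rule for `n` items: given a valuation profile and a vector of item prices
(in `[0,∞]`), `choose` returns the purchased item (or `none` if nothing is purchased).
The axioms say: a purchased item has a finite price and yields nonnegative utility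
(`feasible`), the purchased item maximizes utility among all items (`optimal`), and the buyer
does purchase whenever some item yields nonnegative utility (`active`). Ties among
utility-maximizing items are broken according to the (fixed) rule embodied by `choose`. -/
structure BuyerRule (n : ℕ) where
  choose : (Fin n → ℝ) → (Fin n → ℝ≥0∞) → Option (Fin n)
  feasible : ∀ v p j, choose v p = some j → p j ≠ ⊤ ∧ (p j).toReal ≤ v j
  optimal : ∀ v p j k, choose v p = some j → p k ≠ ⊤ →
      v k - (p k).toReal ≤ v j - (p j).toReal
  active : ∀ v p, (∃ k, p k ≠ ⊤ ∧ (p k).toReal ≤ v k) → (choose v p).isSome = true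

/-- The seller's revenue from valuation profile `v` under pricing `p`. -/
def BuyerRule.revenue {n : ℕ} (B : BuyerRule n) (p : Fin n → ℝ≥0∞) (v : Fin n → ℝ) : ℝ≥0∞ :=
  (B.choose v p).elim 0 (fun j => p j)

/-- A joint distribution `F` on valuation profiles is compatible with the marginals `marg`
if it is a probability measure whose `j`-th one-dimensional marginal is `marg j` for every `j`. -/
def Compatible {n : ℕ} (marg : Fin n → Measure ℝ) (F : Measure (Fin n → ℝ)) : Prop :=
  IsProbabilityMeasure F ∧ ∀ j, F.map (fun v => v j) = marg j

/-- `R(p,F)`: the expected revenue of pricing `p` under joint distribution `F`. -/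
def expRev {n : ℕ} (B : BuyerRule n) (p : Fin n → ℝ≥0∞) (F : Measure (Fin n → ℝ)) : ℝ≥0∞ :=
  ∫⁻ v, B.revenue p v ∂F

/-- `R(p)`: the robust revenue guarantee of `p`, the infimum of `R(p,F)` over compatible `F`. -/
def robustRev {n : ℕ} (B : BuyerRule n) (marg : Fin n → Measure ℝ) (p : Fin n → ℝ≥0∞) : ℝ≥0∞ :=
  ⨅ (F : Measure (Fin n → ℝ)) (_ : Compatible marg F), expRev B p F

/-- `R*`: the optimal robust revenue guarantee over all pricings. -/
def optRobust {n : ℕ} (B : BuyerRule n) (marg : Fin n → Measure ℝ) : ℝ≥0∞ :=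
  ⨆ p : Fin n → ℝ≥0∞, robustRev B marg p

/-- A distribution `μ` on `[0,∞)` with density `f` has monotone hazard rate (MHR):
its hazard rate `h(x) = f(x)/(1 − F(x)) = f(x)/μ(x,∞)` is nondecreasing on the support of `μ`
(i.e. wherever the upper tail still has positive mass). -/
def IsMHR (f : ℝ → ℝ) (μ : Measure ℝ) : Prop :=
  ∀ x y : ℝ, x ≤ y → μ (Set.Ioi y) ≠ 0 →
    f x / (μ (Set.Ioi x)).toReal ≤ f y / (μ (Set.Ioi y)).toReal

/-! Selling only item `i` at its median `m` succeeds whenever `v_i ≥ m`, an event of probability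
at least `1/2` under every compatible joint distribution, so `R(p) ≥ m/2`. Conversely, the revenue
of any pricing is at most the value of the purchased item, and under the comonotone coupling
`v_j = F_j⁻¹(U)`, `U` uniform on `(0, 1)`, every value is small: an MHR distribution with median
`m_j` has tail `1 - F_j(x) ≤ 2^{-x/m_j}` for `x ≥ m_j` (its cumulative hazard is convex and
equals `log 2` at `m_j`), so `F_j⁻¹(u) ≤ m · max(1, log₂(1/(1-u)))`. Integrating over `u` gives
`R* ≤ (1 + 1/(2 log 2)) m ≤ 7m/4`. -/

open Set Real ProbabilityTheory

-- Only meaningful for `u ∈ (0, 1)`; outside, `sInf` returns a junk value.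
def quantile (μ : Measure ℝ) (u : ℝ) : ℝ := sInf {x | u ≤ cdf μ x}

section Quantile

variable {μ : Measure ℝ} {u x : ℝ}

theorem quantile_le_iff (hu : u ∈ Ioo 0 1) : quantile μ u ≤ x ↔ u ≤ cdf μ x := by
  have hne : {x | u ≤ cdf μ x}.Nonempty :=
    ((tendsto_cdf_atTop μ).eventually (eventually_ge_nhds hu.2)).exists
  have hbdd : BddBelow {x | u ≤ cdf μ x} := by
    obtain ⟨y, hy⟩ := ((tendsto_cdf_atBot μ).eventually (eventually_lt_nhds hu.1)).exists
    exact ⟨y, fun z hz => le_of_lt (lt_of_not_ge fun hzy => (hy.trans_le hz).not_ge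
      (monotone_cdf μ hzy))⟩
  refine ⟨fun h => ?_, fun h => csInf_le hbdd h⟩
  refine ge_of_tendsto ((cdf μ).right_continuous x |>.mono Ioi_subset_Ici_self)
    (eventually_nhdsWithin_of_forall fun y hy => ?_)
  obtain ⟨z, hz, hzy⟩ := exists_lt_of_csInf_lt hne (h.trans_lt hy)
  exact hz.trans (monotone_cdf μ hzy.le)

theorem monotoneOn_quantile : MonotoneOn (quantile μ) (Ioo 0 1) := fun _ hu _ hv huv =>
  (quantile_le_iff hu).2 (huv.trans ((quantile_le_iff hv).1 le_rfl))

theorem volume_Ioo_zero_one_inter_Iic {c : ℝ} (hc : c ≤ 1) :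
    volume (Ioo 0 1 ∩ Iic c) = ENNReal.ofReal c := by
  have : Ioo 0 1 ∩ Iic c = Ioc 0 c \ {1} := by
    ext u
    simp only [mem_inter_iff, mem_Ioo, mem_Iic, Set.mem_sdiff, mem_Ioc, mem_singleton_iff]
    constructor
    · rintro ⟨⟨h0, h1⟩, hc'⟩; exact ⟨⟨h0, hc'⟩, h1.ne⟩
    · rintro ⟨⟨h0, hc'⟩, h1⟩; exact ⟨⟨h0, lt_of_le_of_ne (hc'.trans hc) h1⟩, hc'⟩
  rw [this, measure_sdiff_null (measure_singleton 1), volume_Ioc, sub_zero]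

instance : IsProbabilityMeasure (volume.restrict (Ioo (0 : ℝ) 1)) := ⟨by simp⟩

theorem map_quantile_volume_Ioo [IsProbabilityMeasure μ] :
    (volume.restrict (Ioo 0 1)).map (quantile μ) = μ := by
  have hmeas : AEMeasurable (quantile μ) (volume.restrict (Ioo 0 1)) :=
    aemeasurable_restrict_of_monotoneOn measurableSet_Ioo monotoneOn_quantile
  refine Measure.ext_of_Iic _ _ fun x => ?_
  have hpre : quantile μ ⁻¹' Iic x ∩ Ioo 0 1 = Ioo 0 1 ∩ Iic (cdf μ x) := by
    ext u
    simp only [mem_inter_iff, mem_preimage, mem_Iic]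
    exact ⟨fun ⟨h, hu⟩ => ⟨hu, (quantile_le_iff hu).1 h⟩,
      fun ⟨hu, h⟩ => ⟨(quantile_le_iff hu).2 h, hu⟩⟩
  rw [Measure.map_apply_of_aemeasurable hmeas measurableSet_Iic,
    Measure.restrict_apply' measurableSet_Ioo, hpre, volume_Ioo_zero_one_inter_Iic (cdf_le_one μ x),
    ofReal_cdf]

end Quantile

section Hazard

variable {μ : Measure ℝ} {r a b : ℝ}

theorem lintegral_Ioo_mul_exp (hr : 0 ≤ r) (hab : a ≤ b) :
    ∫⁻ σ in Ioo a b, ENNReal.ofReal (r * exp (r * σ)) =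
      ENNReal.ofReal (exp (r * b) - exp (r * a)) := by
  have hderiv : ∀ σ ∈ uIcc a b, HasDerivAt (fun σ => exp (r * σ)) (r * exp (r * σ)) σ :=
    fun σ _ => by simpa [mul_comm] using ((hasDerivAt_id σ).const_mul r).exp
  have hcont : Continuous fun σ => r * exp (r * σ) := by fun_prop
  rw [← ofReal_integral_eq_lintegral_ofReal (hcont.integrableOn_Icc.mono_set Ioo_subset_Icc_self)
      (ae_of_all _ fun σ => mul_nonneg hr (exp_pos _).le), ← integral_Ioc_eq_integral_Ioo,
    ← intervalIntegral.integral_of_le hab,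
    intervalIntegral.integral_eq_sub_of_hasDerivAt hderiv (hcont.intervalIntegrable a b)]

theorem lintegral_Ioc_lintegral_Ioo [SFinite μ] {w : ℝ → ℝ≥0∞} (hw : Measurable w) :
    ∫⁻ τ in Ioc a b, (∫⁻ σ in Ioo a τ, w σ) ∂μ = ∫⁻ σ in Ioc a b, w σ * μ (Ioc σ b) := by
  have hK : Measurable (Function.uncurry fun τ σ : ℝ => (Iio τ).indicator w σ) :=
    (hw.comp measurable_snd).indicator (measurableSet_lt measurable_snd measurable_fst)
  calc ∫⁻ τ in Ioc a b, (∫⁻ σ in Ioo a τ, w σ) ∂μ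
      = ∫⁻ τ in Ioc a b, (∫⁻ σ in Ioc a b, (Iio τ).indicator w σ) ∂μ := by
        refine setLIntegral_congr_fun measurableSet_Ioc fun τ hτ => ?_
        rw [lintegral_indicator measurableSet_Iio, Measure.restrict_restrict measurableSet_Iio]
        congr 2
        ext σ
        simp only [mem_Ioo, mem_inter_iff, mem_Iio, mem_Ioc]
        constructor
        · rintro ⟨h1, h2⟩; exact ⟨h2, h1, h2.le.trans hτ.2⟩
        · rintro ⟨h1, h2, -⟩; exact ⟨h2, h1⟩
    _ = ∫⁻ σ in Ioc a b, ∫⁻ τ in Ioc a b, (Iio τ).indicator w σ ∂μ :=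
        lintegral_lintegral_swap hK.aemeasurable
    _ = ∫⁻ σ in Ioc a b, w σ * μ (Ioc σ b) := by
        refine setLIntegral_congr_fun measurableSet_Ioc fun σ hσ => ?_
        have : (fun τ => (Iio τ).indicator w σ) = (Ioi σ).indicator fun _ => w σ := by
          ext τ; simp only [indicator_apply, mem_Iio, mem_Ioi]
        rw [this, lintegral_indicator_const measurableSet_Ioi,
          Measure.restrict_apply measurableSet_Ioi, inter_comm, Ioc_inter_Ioi,
          sup_eq_right.2 hσ.1.le]

-- Integration by parts for `τ ↦ e^{rτ} μ(τ, ∞)`, via Fubini, with no regularity assumed on `μ`.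
theorem lintegral_exp_add_exp_mul_measure_Ioi [SFinite μ] (hr : 0 ≤ r) (hab : a ≤ b) :
    ∫⁻ τ in Ioc a b, ENNReal.ofReal (exp (r * τ)) ∂μ + ENNReal.ofReal (exp (r * b)) * μ (Ioi b) =
      ENNReal.ofReal (exp (r * a)) * μ (Ioi a) +
        ∫⁻ σ in Ioc a b, ENNReal.ofReal (r * exp (r * σ)) * μ (Ioi σ) := by
  set w : ℝ → ℝ≥0∞ := fun σ => ENNReal.ofReal (r * exp (r * σ))
  have hw : Measurable w := by fun_prop
  have hexp : ∀ t, a ≤ t →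
      ENNReal.ofReal (exp (r * t)) = ENNReal.ofReal (exp (r * a)) + ∫⁻ σ in Ioo a t, w σ := by
    intro t ht
    rw [lintegral_Ioo_mul_exp hr ht, ← ENNReal.ofReal_add (exp_pos _).le
      (sub_nonneg.2 (exp_le_exp.2 (mul_le_mul_of_nonneg_left ht hr))), add_sub_cancel]
  have htail : ∀ σ ≤ b, μ (Ioc σ b) + μ (Ioi b) = μ (Ioi σ) := fun σ hσ => by
    rw [← measure_union (Ioc_disjoint_Ioi le_rfl) measurableSet_Ioi, Ioc_union_Ioi_eq_Ioi hσ]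
  calc ∫⁻ τ in Ioc a b, ENNReal.ofReal (exp (r * τ)) ∂μ + ENNReal.ofReal (exp (r * b)) * μ (Ioi b)
      = (ENNReal.ofReal (exp (r * a)) * μ (Ioc a b) + ∫⁻ σ in Ioc a b, w σ * μ (Ioc σ b)) +
          (ENNReal.ofReal (exp (r * a)) + ∫⁻ σ in Ioc a b, w σ) * μ (Ioi b) := by
        rw [setLIntegral_congr_fun measurableSet_Ioc fun τ hτ => hexp τ hτ.1.le,
          lintegral_add_left measurable_const, setLIntegral_const, mul_comm,
          lintegral_Ioc_lintegral_Ioo hw, hexp b hab, setLIntegral_congr Ioo_ae_eq_Ioc]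
    _ = ENNReal.ofReal (exp (r * a)) * (μ (Ioc a b) + μ (Ioi b)) +
          ∫⁻ σ in Ioc a b, w σ * (μ (Ioc σ b) + μ (Ioi b)) := by
        simp_rw [mul_add]
        rw [lintegral_add_right _ (hw.mul_const _), lintegral_mul_const _ hw]
        ring
    _ = ENNReal.ofReal (exp (r * a)) * μ (Ioi a) + ∫⁻ σ in Ioc a b, w σ * μ (Ioi σ) := by
        rw [htail a hab, setLIntegral_congr_fun measurableSet_Ioc fun σ hσ => by
          rw [htail σ hσ.2]]

theorem restrict_withDensity_ofReal_mono {α : Type*} [MeasurableSpace α] {ν : Measure α}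
    {f g : α → ℝ} {s : Set α} (hs : MeasurableSet s) (hfg : ∀ x ∈ s, f x ≤ g x) :
    (ν.withDensity fun x => ENNReal.ofReal (f x)).restrict s ≤
      (ν.withDensity fun x => ENNReal.ofReal (g x)).restrict s := by
  rw [restrict_withDensity hs, restrict_withDensity hs]
  exact withDensity_mono ((ae_restrict_iff' hs).2
    (ae_of_all _ fun x hx => ENNReal.ofReal_le_ofReal (hfg x hx)))

theorem setLIntegral_exp_withDensity_mul_measureReal_Ioi [IsFiniteMeasure μ] (hr : 0 ≤ r)
    {s : Set ℝ} (hs : MeasurableSet s) :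
    ∫⁻ σ in s, ENNReal.ofReal (exp (r * σ))
        ∂volume.withDensity (fun σ => ENNReal.ofReal (r * μ.real (Ioi σ))) =
      ∫⁻ σ in s, ENNReal.ofReal (r * exp (r * σ)) * μ (Ioi σ) := by
  have hS : Measurable fun σ => μ.real (Ioi σ) :=
    Antitone.measurable fun _ _ h => measureReal_mono (Ioi_subset_Ioi h)
  rw [setLIntegral_withDensity_eq_setLIntegral_mul _ (by fun_prop) (by fun_prop) hs]
  refine setLIntegral_congr_fun hs fun σ _ => ?_
  rw [Pi.mul_apply, ← ofReal_measureReal, ← ENNReal.ofReal_mul (mul_nonneg hr measureReal_nonneg),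
    ← ENNReal.ofReal_mul (mul_nonneg hr (exp_pos _).le)]
  ring_nf

theorem setLIntegral_Ioc_mul_exp_mul_measure_Ioi_ne_top [IsFiniteMeasure μ] (hr : 0 ≤ r)
    (hab : a ≤ b) : ∫⁻ σ in Ioc a b, ENNReal.ofReal (r * exp (r * σ)) * μ (Ioi σ) ≠ ⊤ := by
  refine ne_top_of_le_ne_top ?_ (lintegral_mono fun σ =>
    mul_le_mul_right (measure_mono (subset_univ (Ioi σ))) _)
  rw [lintegral_mul_const _ (by fun_prop), ← setLIntegral_congr Ioo_ae_eq_Ioc,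
    lintegral_Ioo_mul_exp hr hab]
  exact ENNReal.mul_ne_top ENNReal.ofReal_ne_top (measure_ne_top _ _)

theorem ofReal_exp_mul_measure_le_iff [IsFiniteMeasure μ] {x y : ℝ} {s t : Set ℝ} :
    ENNReal.ofReal (exp x) * μ s ≤ ENNReal.ofReal (exp y) * μ t ↔
      exp x * μ.real s ≤ exp y * μ.real t := by
  rw [← ENNReal.toReal_le_toReal (by finiteness) (by finiteness), ENNReal.toReal_mul,
    ENNReal.toReal_mul, ENNReal.toReal_ofReal (exp_pos _).le, ENNReal.toReal_ofReal (exp_pos _).le,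
    measureReal_def, measureReal_def]

variable {f : ℝ → ℝ}

-- Where the hazard rate is at most (at least) `r`, `τ ↦ e^{rτ} μ(τ, ∞)` increases (decreases).
theorem exp_mul_measureReal_Ioi_le_of_density_le [IsFiniteMeasure μ]
    (hμ : μ = volume.withDensity fun x => ENNReal.ofReal (f x)) (hr : 0 ≤ r) (hab : a ≤ b)
    (hf : ∀ τ ∈ Ioc a b, f τ ≤ r * μ.real (Ioi τ)) :
    exp (r * a) * μ.real (Ioi a) ≤ exp (r * b) * μ.real (Ioi b) := by
  have hle : ∫⁻ τ in Ioc a b, ENNReal.ofReal (exp (r * τ)) ∂μ ≤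
      ∫⁻ σ in Ioc a b, ENNReal.ofReal (r * exp (r * σ)) * μ (Ioi σ) := by
    rw [← setLIntegral_exp_withDensity_mul_measureReal_Ioi hr measurableSet_Ioc]
    refine lintegral_mono' ?_ le_rfl
    calc μ.restrict (Ioc a b) = (volume.withDensity fun x => ENNReal.ofReal (f x)).restrict
          (Ioc a b) := by rw [← hμ]
      _ ≤ _ := restrict_withDensity_ofReal_mono measurableSet_Ioc hf
  rw [← ofReal_exp_mul_measure_le_iff (μ := μ), ← ENNReal.add_le_add_iff_right
    (setLIntegral_Ioc_mul_exp_mul_measure_Ioi_ne_top (μ := μ) hr hab),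
    ← lintegral_exp_add_exp_mul_measure_Ioi hr hab, add_comm]
  gcongr

theorem exp_mul_measureReal_Ioi_le_of_le_density [IsFiniteMeasure μ]
    (hμ : μ = volume.withDensity fun x => ENNReal.ofReal (f x)) (hr : 0 ≤ r) (hab : a ≤ b)
    (hf : ∀ τ ∈ Ioc a b, r * μ.real (Ioi τ) ≤ f τ) :
    exp (r * b) * μ.real (Ioi b) ≤ exp (r * a) * μ.real (Ioi a) := by
  have hle : ∫⁻ σ in Ioc a b, ENNReal.ofReal (r * exp (r * σ)) * μ (Ioi σ) ≤
      ∫⁻ τ in Ioc a b, ENNReal.ofReal (exp (r * τ)) ∂μ := by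
    rw [← setLIntegral_exp_withDensity_mul_measureReal_Ioi hr measurableSet_Ioc]
    refine lintegral_mono' ?_ le_rfl
    calc _ ≤ (volume.withDensity fun x => ENNReal.ofReal (f x)).restrict (Ioc a b) :=
          restrict_withDensity_ofReal_mono measurableSet_Ioc hf
      _ = μ.restrict (Ioc a b) := by rw [← hμ]
  rw [← ofReal_exp_mul_measure_le_iff (μ := μ), ← ENNReal.add_le_add_iff_right
    (setLIntegral_Ioc_mul_exp_mul_measure_Ioi_ne_top (μ := μ) hr hab),
    ← lintegral_exp_add_exp_mul_measure_Ioi hr hab, add_comm]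
  gcongr

end Hazard

section Median

variable {μ : Measure ℝ} {m : ℝ}

theorem measure_Ioi_eq_inv_two [IsProbabilityMeasure μ] (hmed : μ (Iic m) = 2⁻¹) :
    μ (Ioi m) = 2⁻¹ := by
  rw [← compl_Iic, prob_compl_eq_one_sub measurableSet_Iic, hmed, ENNReal.one_sub_inv_two]

theorem measureReal_Ioi_zero_eq_one [IsProbabilityMeasure μ] [NullSingletonClass μ]
    (hneg : μ (Iio 0) = 0) : μ.real (Ioi 0) = 1 := by
  rw [← compl_Iic, probReal_compl_eq_one_sub measurableSet_Iic, measureReal_def,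
    ← measure_congr Iio_ae_eq_Iic, hneg, ENNReal.toReal_zero, sub_zero]

theorem pos_of_measure_Iic_eq_inv_two [NullSingletonClass μ] (hneg : μ (Iio 0) = 0)
    (hmed : μ (Iic m) = 2⁻¹) : 0 < m := by
  by_contra! hm
  have := measure_mono (μ := μ) (Iic_subset_Iic.2 hm)
  rw [hmed, ← measure_congr Iio_ae_eq_Iic, hneg] at this
  norm_num at this

end Median

section MHR

variable {μ : Measure ℝ} {f : ℝ → ℝ} {m : ℝ}

-- A hazard rate below `log 2 / m` at `σ ≥ m` would, by MHR, persist on `(0, m]`, and the tail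
-- could not fall from `1` to `1/2` there.
theorem log_two_div_mul_measureReal_Ioi_le_of_isMHR [IsProbabilityMeasure μ]
    (hf : ∀ x, 0 ≤ f x) (hμ : μ = volume.withDensity fun x => ENNReal.ofReal (f x))
    (hmhr : IsMHR f μ) (h0 : μ.real (Ioi 0) = 1) (hm : 0 < m) (hmed : μ.real (Ioi m) = 2⁻¹)
    {σ : ℝ} (hσ : m ≤ σ) : log 2 / m * μ.real (Ioi σ) ≤ f σ := by
  rcases measureReal_nonneg.eq_or_lt with hS | hS
  · rw [← hS, mul_zero]; exact hf σ
  set r := f σ / μ.real (Ioi σ)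
  have hfr : ∀ τ ∈ Ioc 0 m, f τ ≤ r * μ.real (Ioi τ) := by
    intro τ hτ
    have hτσ : τ ≤ σ := hτ.2.trans hσ
    have hSτ : 0 < μ.real (Ioi τ) := hS.trans_le (measureReal_mono (Ioi_subset_Ioi hτσ))
    rw [← div_le_iff₀ hSτ]
    exact hmhr τ σ hτσ fun h => by simp [measureReal_def, h] at hS
  have hexp := exp_mul_measureReal_Ioi_le_of_density_le hμ (div_nonneg (hf σ) hS.le) hm.le hfr
  rw [mul_zero, exp_zero, one_mul, h0, hmed] at hexp
  have hlog : log 2 ≤ r * m := by rw [log_le_iff_le_exp two_pos]; linarith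
  calc log 2 / m * μ.real (Ioi σ) ≤ r * μ.real (Ioi σ) := by
        gcongr; rwa [div_le_iff₀ hm]
    _ = f σ := div_mul_cancel₀ _ hS.ne'

theorem measureReal_Ioi_le_exp_of_isMHR [IsProbabilityMeasure μ]
    (hf : ∀ x, 0 ≤ f x) (hμ : μ = volume.withDensity fun x => ENNReal.ofReal (f x))
    (hmhr : IsMHR f μ) (h0 : μ.real (Ioi 0) = 1) (hm : 0 < m) (hmed : μ.real (Ioi m) = 2⁻¹)
    {x : ℝ} (hx : m ≤ x) : μ.real (Ioi x) ≤ exp (-(log 2 / m * x)) := by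
  have hexp := exp_mul_measureReal_Ioi_le_of_le_density hμ (by positivity) hx fun τ hτ =>
    log_two_div_mul_measureReal_Ioi_le_of_isMHR hf hμ hmhr h0 hm hmed hτ.1.le
  rw [hmed, div_mul_cancel₀ _ hm.ne', exp_log two_pos] at hexp
  rw [exp_neg, ← one_div, le_div_iff₀ (exp_pos _)]
  linarith

theorem quantile_le_of_measureReal_Ioi_le_exp [IsProbabilityMeasure μ] (hm : 0 < m)
    (htail : ∀ x, m ≤ x → μ.real (Ioi x) ≤ exp (-(log 2 / m * x))) {u : ℝ} (hu : u ∈ Ioo 0 1) :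
    quantile μ u ≤ m * max 1 (-log (1 - u) / log 2) := by
  set z := max 1 (-log (1 - u) / log 2)
  have hlog2 : 0 < log 2 := log_pos one_lt_two
  have hmz : m ≤ m * z := le_mul_of_one_le_right hm.le (le_max_left _ _)
  have hz : exp (-(log 2 / m * (m * z))) ≤ 1 - u := calc
    exp (-(log 2 / m * (m * z))) = exp (-(log 2 * z)) := by field_simp
    _ ≤ exp (log (1 - u)) := by
      refine exp_le_exp.2 ?_
      have := (div_le_iff₀ hlog2).1 (le_max_right 1 (-log (1 - u) / log 2))
      linarith
    _ = 1 - u := exp_log (by linarith [hu.2])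
  rw [quantile_le_iff hu, cdf_eq_real, ← compl_Ioi, probReal_compl_eq_one_sub measurableSet_Ioi]
  linarith [htail _ hmz]

theorem quantile_le_of_isMHR [IsProbabilityMeasure μ] (hf : ∀ x, 0 ≤ f x)
    (hμ : μ = volume.withDensity fun x => ENNReal.ofReal (f x)) (hneg : μ (Iio 0) = 0)
    (hmhr : IsMHR f μ) (hmed : μ (Iic m) = 2⁻¹) {u : ℝ} (hu : u ∈ Ioo 0 1) :
    quantile μ u ≤ m * max 1 (-log (1 - u) / log 2) := by
  have : NullSingletonClass μ := hμ ▸ inferInstance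
  have hm := pos_of_measure_Iic_eq_inv_two hneg hmed
  have hupper : μ.real (Ioi m) = 2⁻¹ := by
    simp [measureReal_def, measure_Ioi_eq_inv_two hmed]
  exact quantile_le_of_measureReal_Ioi_le_exp hm (fun x hx => measureReal_Ioi_le_exp_of_isMHR hf
    hμ hmhr (measureReal_Ioi_zero_eq_one hneg) hm hupper hx) hu

end MHR

theorem lintegral_Ioi_one_exp_neg_log_two_mul :
    ∫⁻ t in Ioi 1, ENNReal.ofReal (exp (-log 2 * t)) = ENNReal.ofReal (1 / (2 * log 2)) := by
  have hlog2 : -log 2 < 0 := neg_lt_zero.2 (log_pos one_lt_two)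
  rw [← ofReal_integral_eq_lintegral_ofReal (integrableOn_exp_mul_Ioi hlog2 1)
    (ae_of_all _ fun t => (exp_pos _).le), integral_exp_mul_Ioi hlog2, mul_one,
    exp_neg, exp_log two_pos]
  congr 1
  field_simp

theorem lintegral_max_one_neg_log_div_log_two_le :
    ∫⁻ u in Ioo 0 1, ENNReal.ofReal (max 1 (-log (1 - u) / log 2)) ≤ ENNReal.ofReal (7 / 4) := by
  set g : ℝ → ℝ := fun u => max 1 (-log (1 - u) / log 2)
  have hlog2 : 0 < log 2 := log_pos one_lt_two
  have hg : Measurable g := by fun_prop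
  have htail : ∀ t ∈ Ioi (1 : ℝ),
      volume.restrict (Ioo 0 1) {u | t < g u} ≤ ENNReal.ofReal (exp (-log 2 * t)) := by
    intro t ht
    have hsub : {u | t < g u} ∩ Ioo 0 1 ⊆ Ioo (1 - exp (-log 2 * t)) 1 := by
      rintro u ⟨htu, hu0, hu1⟩
      have hL : t * log 2 < -log (1 - u) :=
        (lt_div_iff₀ hlog2).1 ((lt_max_iff.1 htu).resolve_left (not_lt.2 (le_of_lt ht)))
      have : 1 - u < exp (-log 2 * t) :=
        (log_lt_iff_lt_exp (by linarith)).1 (by linarith)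
      exact ⟨by linarith, hu1⟩
    rw [Measure.restrict_apply' measurableSet_Ioo]
    refine (measure_mono hsub).trans_eq ?_
    rw [volume_Ioo, sub_sub_cancel]
  rw [lintegral_eq_lintegral_meas_lt _ (ae_of_all _ fun u => zero_le_one.trans (le_max_left _ _))
    hg.aemeasurable, ← Ioc_union_Ioi_eq_Ioi zero_le_one,
    lintegral_union measurableSet_Ioi (Ioc_disjoint_Ioi le_rfl)]
  calc (∫⁻ t in Ioc 0 1, volume.restrict (Ioo 0 1) {u | t < g u})
        + ∫⁻ t in Ioi 1, volume.restrict (Ioo 0 1) {u | t < g u}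
      ≤ (∫⁻ _ in Ioc (0 : ℝ) 1, 1) + ∫⁻ t in Ioi 1, ENNReal.ofReal (exp (-log 2 * t)) :=
        add_le_add (setLIntegral_mono' measurableSet_Ioc fun _ _ => prob_le_one)
          (setLIntegral_mono' measurableSet_Ioi htail)
    _ = ENNReal.ofReal (1 + 1 / (2 * log 2)) := by
        rw [lintegral_Ioi_one_exp_neg_log_two_mul, setLIntegral_const, volume_Ioc, sub_zero,
          one_mul, ENNReal.ofReal_one,
          ENNReal.ofReal_add zero_le_one (by positivity), ENNReal.ofReal_one]
    _ ≤ ENNReal.ofReal (7 / 4) := by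
        have : 1 / (2 * log 2) ≤ 3 / 4 := by
          rw [div_le_iff₀ (by positivity)]
          linarith [log_two_gt_d9]
        exact ENNReal.ofReal_le_ofReal (by linarith)

namespace BuyerRule

variable {n : ℕ} (B : BuyerRule n)

theorem revenue_le_of_forall_le {q : Fin n → ℝ≥0∞} {v : Fin n → ℝ} {M : ℝ} (hv : ∀ j, v j ≤ M) :
    B.revenue q v ≤ ENNReal.ofReal M := by
  rw [revenue]
  cases hj : B.choose v q with
  | none => exact zero_le
  | some j =>
    obtain ⟨hfin, hle⟩ := B.feasible v q j hj
    rw [Option.elim, ← ENNReal.ofReal_toReal hfin]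
    exact ENNReal.ofReal_le_ofReal (hle.trans (hv j))

theorem revenue_eq_of_single_price {p : Fin n → ℝ≥0∞} {i : Fin n} (hpj : ∀ j, j ≠ i → p j = ⊤)
    (hpi : p i ≠ ⊤) {v : Fin n → ℝ} (hv : (p i).toReal ≤ v i) : B.revenue p v = p i := by
  obtain ⟨j, hj⟩ := Option.isSome_iff_exists.1 (B.active v p ⟨i, hpi, hv⟩)
  obtain rfl : j = i := by_contra fun hji => (B.feasible v p j hj).1 (hpj j hji)
  rw [revenue, hj, Option.elim]

end BuyerRule

def comonotoneCoupling {n : ℕ} (marg : Fin n → Measure ℝ) : Measure (Fin n → ℝ) :=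
  (volume.restrict (Ioo 0 1)).map fun u j => quantile (marg j) u

section Robust

variable {n : ℕ} (B : BuyerRule n) {marg : Fin n → Measure ℝ}

theorem compatible_comonotoneCoupling (hprob : ∀ j, IsProbabilityMeasure (marg j)) :
    Compatible marg (comonotoneCoupling marg) := by
  have hmeas : AEMeasurable (fun u j => quantile (marg j) u) (volume.restrict (Ioo 0 1)) :=
    aemeasurable_pi_lambda _ fun j =>
      aemeasurable_restrict_of_monotoneOn measurableSet_Ioo monotoneOn_quantile
  refine ⟨Measure.isProbabilityMeasure_map hmeas, fun j => ?_⟩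
  rw [comonotoneCoupling,
    AEMeasurable.map_map_of_aemeasurable (measurable_pi_apply j).aemeasurable hmeas]
  exact map_quantile_volume_Ioo

theorem optRobust_le_of_quantile_le (hprob : ∀ j, IsProbabilityMeasure (marg j)) {g : ℝ → ℝ}
    (hg : ∀ j, ∀ u ∈ Ioo 0 1, quantile (marg j) u ≤ g u) :
    optRobust B marg ≤ ∫⁻ u in Ioo 0 1, ENNReal.ofReal (g u) :=
  iSup_le fun q => calc
    robustRev B marg q ≤ expRev B q (comonotoneCoupling marg) :=
      iInf₂_le _ (compatible_comonotoneCoupling hprob)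
    _ ≤ ∫⁻ u in Ioo 0 1, B.revenue q fun j => quantile (marg j) u := lintegral_map_le _ _
    _ ≤ ∫⁻ u in Ioo 0 1, ENNReal.ofReal (g u) :=
      setLIntegral_mono' measurableSet_Ioo fun u hu =>
        B.revenue_le_of_forall_le fun j => hg j u hu

theorem le_robustRev_of_single_price {p : Fin n → ℝ≥0∞} {i : Fin n} {a : ℝ} (ha : 0 ≤ a)
    (hpi : p i = ENNReal.ofReal a) (hpj : ∀ j, j ≠ i → p j = ⊤) :
    ENNReal.ofReal a * marg i (Ici a) ≤ robustRev B marg p := by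
  refine le_iInf₂ fun F hF => ?_
  have hsale : {v : Fin n → ℝ | a ≤ v i}.indicator (fun _ => ENNReal.ofReal a) ≤ B.revenue p := by
    intro v
    rw [indicator_apply]
    split_ifs with hv
    · rw [B.revenue_eq_of_single_price hpj (hpi ▸ ENNReal.ofReal_ne_top)
        (by rwa [hpi, ENNReal.toReal_ofReal ha]), hpi]
    · exact zero_le
  calc ENNReal.ofReal a * marg i (Ici a)
      = ENNReal.ofReal a * F {v | a ≤ v i} := by
        rw [← hF.2 i, Measure.map_apply (measurable_pi_apply i) measurableSet_Ici]; rfl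
    _ = ∫⁻ v, {v : Fin n → ℝ | a ≤ v i}.indicator (fun _ => ENNReal.ofReal a) v ∂F := by
        rw [lintegral_indicator_const (measurableSet_le measurable_const (measurable_pi_apply i))]
    _ ≤ expRev B p F := lintegral_mono hsale

end Robust

theorem mhr_max_median_single_price_is_three_point_five_max_min_optimal
    (n : ℕ) (B : BuyerRule n) (marg : Fin n → Measure ℝ)
    (f : Fin n → ℝ → ℝ) (hf : ∀ j x, 0 ≤ f j x)
    (hdens : ∀ j, marg j = volume.withDensity (fun x => ENNReal.ofReal (f j x)))
    (hprob : ∀ j, IsProbabilityMeasure (marg j))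
    (hnonneg : ∀ j, marg j (Set.Iio 0) = 0)
    (hmhr : ∀ j, IsMHR (f j) (marg j))
    (med : Fin n → ℝ)
    (hmed : ∀ j : Fin n, marg j (Set.Iic (med j)) = 2⁻¹)
    (i : Fin n) (hmax : ∀ j : Fin n, med j ≤ med i)
    (p : Fin n → ℝ≥0∞)
    (hpi : p i = ENNReal.ofReal (med i)) (hpj : ∀ j : Fin n, j ≠ i → p j = ⊤) :
    optRobust B marg ≤ (7 / 2 : ℝ≥0∞) * robustRev B marg p := by
  have hquantile : ∀ j, ∀ u ∈ Ioo 0 1,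
      quantile (marg j) u ≤ med i * max 1 (-log (1 - u) / log 2) := fun j u hu =>
    (quantile_le_of_isMHR (hf j) (hdens j) (hnonneg j) (hmhr j) (hmed j) hu).trans
      (by gcongr; exact hmax j)
  have : NullSingletonClass (marg i) := hdens i ▸ inferInstance
  have hpos : 0 < med i := pos_of_measure_Iic_eq_inv_two (hnonneg i) (hmed i)
  have hhalf : 2⁻¹ ≤ marg i (Ici (med i)) :=
    (measure_Ioi_eq_inv_two (hmed i)).symm.trans_le (measure_mono Ioi_subset_Ici_self)
  calc optRobust B marg ≤ ∫⁻ u in Ioo 0 1, ENNReal.ofReal (med i * max 1 (-log (1 - u) / log 2)) :=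
        optRobust_le_of_quantile_le B hprob hquantile
    _ = ENNReal.ofReal (med i) *
          ∫⁻ u in Ioo 0 1, ENNReal.ofReal (max 1 (-log (1 - u) / log 2)) := by
        simp_rw [ENNReal.ofReal_mul hpos.le]
        exact lintegral_const_mul' _ _ ENNReal.ofReal_ne_top
    _ ≤ ENNReal.ofReal (med i) * (7 / 2 * 2⁻¹) := by
        refine mul_le_mul_right (lintegral_max_one_neg_log_div_log_two_le.trans_eq ?_) _
        rw [← ENNReal.ofReal_ofNat, ← ENNReal.ofReal_ofNat 2,
          ← ENNReal.ofReal_div_of_pos two_pos, ← ENNReal.ofReal_inv_of_pos two_pos,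
          ← ENNReal.ofReal_mul (by norm_num)]
        norm_num
    _ ≤ 7 / 2 * (ENNReal.ofReal (med i) * marg i (Ici (med i))) := by
        rw [mul_left_comm]; gcongr
    _ ≤ 7 / 2 * robustRev B marg p := by
        gcongr; exact le_robustRev_of_single_price B hpos.le hpi hpj

end
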